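/- arXiv:2604.07186 — 5 statements merged into one kernel-verified Lean document; each statement's English description precedes it below -/
import Mathlib

section
/- Let (α_{n,N})_{n,N∈ℕ} and (β_{n,N})_{n,N∈ℕ} be nonnegative doubly indexed sequences, summable in n for each fixed N, and let (I_N)_{N∈ℕ} be a sequence of intervals of natural numbers, such that lim_{N→∞} ∑_{n∈ℕ} β_{n,N} = lim_{N→∞} ∑_{n∈ℕ} α_{n,N} = lim_{N→∞} ∑_{n∈I_N} α_{n,N} = 1. Assume α_{n,N} > 0 for all N ∈ ℕ and n ∈ I_N, and that there is a function E : ℕ → ℝ with E(N) → 0 such that |1 − β_{n,N}/α_{n,N}| ≤ E(N) for all N ∈ ℕ and n ∈ I_N. Then the supremum, over all functions f : ℕ → ℂ with ‖f‖∞ ≤ 1, of | ∑_{n∈ℕ} α_{n,N} f(n) − ∑_{n∈ℕ} β_{n,N} f(n) | tends to 0 as N → ∞. -/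
open Filter Finset

/-!
The distance between the two averages is at most the total variation `∑ |α_{n,N} - β_{n,N}|`.
On `I_N` the ratio condition gives `|α - β| ≤ E(N) α`, and off `I_N` we only use
`|α - β| ≤ α + β`; hence the total variation is at most
`∑ α + ∑ β - 2 (1 - E(N)) ∑_{I_N} α`, which tends to `1 + 1 - 2 = 0`.
-/

/-- Discrete derivative: `ΔW(N) = W(N) - W(N-1)` for `N ≥ 2`, and `ΔW(1) = W(1)`. -/
noncomputable def dd (W : ℕ → ℝ) (N : ℕ) : ℝ := if 2 ≤ N then W N - W (N - 1) else W 1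

/-- Weighted average `E^W_{n ≤ N} f(n) = (1/W(N)) ∑_{n=1}^N ΔW(n) f(n)`. -/
noncomputable def wAvg (W : ℕ → ℝ) (f : ℕ → ℂ) (N : ℕ) : ℂ :=
  (1 / (W N : ℂ)) * ∑ n ∈ Finset.Icc 1 N, (dd W n : ℂ) * f n

/-- Cesàro average `E_{n ≤ N} f(n) = (1/N) ∑_{n=1}^N f(n)`. -/
noncomputable def cesaro (f : ℕ → ℂ) (N : ℕ) : ℂ :=
  (1 / (N : ℂ)) * ∑ n ∈ Finset.Icc 1 N, f n

/-- Parity-neutral binomial mean. -/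
noncomputable def e2bin (f : ℕ → ℂ) (N : ℕ) : ℂ :=
  (1 / 2 ^ (N + 1) : ℂ) * ∑ n ∈ Finset.Icc 1 (2 * N), (Nat.choose N (n / 2) : ℂ) * f n

/-- Binomial mean. -/
noncomputable def ebin (f : ℕ → ℂ) (N : ℕ) : ℂ :=
  (1 / 2 ^ N : ℂ) * ∑ n ∈ Finset.Icc 1 N, (Nat.choose N n : ℂ) * f n

/-- The class 𝒲: eventually non-decreasing nonnegative functions tending to ∞. -/
def memW (W : ℕ → ℝ) : Prop :=
  (∀ n, 0 ≤ W n) ∧ (∃ N₀ : ℕ, ∀ m n : ℕ, N₀ ≤ m → m ≤ n → W m ≤ W n) ∧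
    Tendsto W atTop atTop

/-- The class 𝒲*: members of 𝒲 for which `N·Δ²W(N)/ΔW(N)` converges in `ℝ ∪ {±∞}`. -/
def memWstar (W : ℕ → ℝ) : Prop :=
  memW W ∧ ∃ l : EReal,
    Tendsto (fun N : ℕ => (((N : ℝ) * dd (dd W) N / dd W N : ℝ) : EReal)) atTop (nhds l)

/-- The class ℒ: members of 𝒲 (with values in ℕ) whose discrete derivative is
eventually in {0,1}. -/
def memL (L : ℕ → ℕ) : Prop :=
  memW (fun n => (L n : ℝ)) ∧
    ∃ N₀ : ℕ, ∀ n : ℕ, N₀ ≤ n → L n = L (n - 1) ∨ L n = L (n - 1) + 1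

/-- Gaussian probability density with mean μ and standard deviation σ. -/
noncomputable def gauss (x μ σ : ℝ) : ℝ :=
  (1 / (σ * Real.sqrt (2 * Real.pi))) * Real.exp (-(x - μ) ^ 2 / (2 * σ ^ 2))

/-- The Gaussian condition \eqref{gaussian_condition}. -/
def gaussCond (ϑ : ℕ → ℕ) (L : ℕ → ℕ) : Prop :=
  Tendsto (fun N : ℕ => ∑' k : ℕ,
      |(((Finset.Icc 1 N).filter (fun n => ϑ n = k + 1)).card : ℝ) / N -
        gauss (k + 1 : ℝ) (L N) (Real.sqrt (L N))|) atTop (nhds 0)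

/-- Ω(n): number of prime factors with multiplicity. -/
def bigOmega (n : ℕ) : ℕ := n.primeFactorsList.length

/-- ω(n): number of distinct prime factors. -/
def smallOmega (n : ℕ) : ℕ := n.primeFactors.card

/-- Uniform distribution mod 1. -/
def udMod1 (x : ℕ → ℝ) : Prop :=
  ∀ a b : ℝ, 0 ≤ a → a < b → b ≤ 1 →
    Tendsto (fun N : ℕ =>
        (((Finset.Icc 1 N).filter
            (fun n => a ≤ Int.fract (x n) ∧ Int.fract (x n) < b)).card : ℝ) / N)
      atTop (nhds (b - a))

lemma abs_sub_le_mul_of_abs_one_sub_div_le {a b e : ℝ} (ha : 0 < a) (h : |1 - b / a| ≤ e) :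
    |a - b| ≤ e * a := by
  have hab : a - b = (1 - b / a) * a := by field_simp
  rw [hab, abs_mul, abs_of_pos ha]
  exact mul_le_mul_of_nonneg_right h ha.le

lemma abs_sub_add_two_mul_le_add {a b e : ℝ} (h : |a - b| ≤ e * a) :
    |a - b| + 2 * (1 - e) * a ≤ a + b := by
  rcases le_total a b with hle | hle
  · rw [abs_of_nonpos (sub_nonpos.2 hle)] at h ⊢
    linarith
  · rw [abs_of_nonneg (sub_nonneg.2 hle)] at h ⊢
    linarith

section TotalVariation

variable {ι : Type*} {a b : ι → ℝ}

lemma norm_tsum_mul_sub_tsum_mul_le (ha : Summable a) (hb : Summable b) {f : ι → ℂ}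
    (hf : ∀ i, ‖f i‖ ≤ 1) :
    ‖∑' i, (a i : ℂ) * f i - ∑' i, (b i : ℂ) * f i‖ ≤ ∑' i, |a i - b i| := by
  have hbound (c : ι → ℝ) (i : ι) : ‖(c i : ℂ) * f i‖ ≤ |c i| := by
    simpa [norm_mul] using mul_le_mul_of_nonneg_left (hf i) (abs_nonneg (c i))
  have hsub : ∑' i, (a i : ℂ) * f i - ∑' i, (b i : ℂ) * f i =
      ∑' i, ((a i - b i : ℝ) : ℂ) * f i := by
    rw [← (ha.abs.of_norm_bounded (hbound a)).tsum_sub (hb.abs.of_norm_bounded (hbound b))]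
    push_cast
    simp only [sub_mul]
  rw [hsub]
  exact tsum_of_norm_bounded (ha.sub hb).abs.hasSum fun i => hbound (fun i => a i - b i) i

lemma tsum_abs_sub_le (ha0 : ∀ i, 0 ≤ a i) (hb0 : ∀ i, 0 ≤ b i) (ha : Summable a)
    (hb : Summable b) (J : Finset ι) (e : ℝ) (hJ : ∀ i ∈ J, |a i - b i| ≤ e * a i) :
    ∑' i, |a i - b i| ≤ ∑' i, a i + ∑' i, b i - 2 * (1 - e) * ∑ i ∈ J, a i := by
  have hJsum : HasSum (Set.indicator J a) (∑ i ∈ J, a i) := by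
    rw [sum_eq_tsum_indicator]
    exact (summable_of_ne_finset_zero fun i hi => Set.indicator_of_notMem hi a).hasSum
  have hpointwise (i : ι) : |a i - b i| + 2 * (1 - e) * Set.indicator J a i ≤ a i + b i := by
    by_cases hi : i ∈ J
    · rw [Set.indicator_of_mem (Finset.mem_coe.2 hi)]
      exact abs_sub_add_two_mul_le_add (hJ i hi)
    · rw [Set.indicator_of_notMem (Finset.mem_coe.not.2 hi), mul_zero, add_zero]
      exact abs_sub_le_iff.2 ⟨by linarith [hb0 i], by linarith [ha0 i]⟩
  have hsum := hasSum_le hpointwise ((ha.sub hb).abs.hasSum.add (hJsum.mul_left _))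
    (ha.hasSum.add hb.hasSum)
  linarith

end TotalVariation

lemma sum_preimage_add_one {M : Type*} [AddCommMonoid M] {s : Finset ℕ} (hs : 0 ∉ s)
    (g : ℕ → M) :
    ∑ n ∈ s.preimage (· + 1) (add_left_injective 1).injOn, g (n + 1) = ∑ n ∈ s, g n :=
  sum_preimage _ s _ g fun n hn hrange =>
    absurd ⟨n - 1, Nat.sub_add_cancel (Nat.pos_of_ne_zero (ne_of_mem_of_not_mem hn hs))⟩ hrange

lemma norm_tsum_succ_mul_sub_le {a b : ℕ → ℝ}
    (ha0 : ∀ n, 0 ≤ a n) (hb0 : ∀ n, 0 ≤ b n)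
    (ha : Summable fun n => a (n + 1)) (hb : Summable fun n => b (n + 1))
    {s : Finset ℕ} (hs : 0 ∉ s) {e : ℝ}
    (hpos : ∀ n ∈ s, 0 < a n) (hratio : ∀ n ∈ s, |1 - b n / a n| ≤ e)
    {f : ℕ → ℂ} (hf : ∀ n, ‖f n‖ ≤ 1) :
    ‖∑' n, (a (n + 1) : ℂ) * f (n + 1) - ∑' n, (b (n + 1) : ℂ) * f (n + 1)‖ ≤
      ∑' n, a (n + 1) + ∑' n, b (n + 1) - 2 * (1 - e) * ∑ n ∈ s, a n := by
  have hshifted : ∀ n ∈ s.preimage (· + 1) (add_left_injective 1).injOn,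
      |a (n + 1) - b (n + 1)| ≤ e * a (n + 1) := by
    intro n hn
    replace hn : n + 1 ∈ s := (Finset.mem_preimage (f := (· + 1))).1 hn
    exact abs_sub_le_mul_of_abs_one_sub_div_le (hpos _ hn) (hratio _ hn)
  calc _ ≤ ∑' n, |a (n + 1) - b (n + 1)| :=
        norm_tsum_mul_sub_tsum_mul_le ha hb fun n => hf (n + 1)
    _ ≤ _ := tsum_abs_sub_le (fun n => ha0 (n + 1)) (fun n => hb0 (n + 1)) ha hb _ _ hshifted
    _ = _ := by rw [sum_preimage_add_one hs a]

/-- `α N n` stands for `α_{n,N}`; sums over the positive integers are written over `n + 1`. -/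
theorem stmt7 (α β : ℕ → ℕ → ℝ) (I : ℕ → Finset ℕ) (E : ℕ → ℝ)
    (hα0 : ∀ N n, 0 ≤ α N n) (hβ0 : ∀ N n, 0 ≤ β N n)
    (hαs : ∀ N, Summable (fun n : ℕ => α N (n + 1)))
    (hβs : ∀ N, Summable (fun n : ℕ => β N (n + 1)))
    (hI : ∀ N, ∃ a b : ℕ, 1 ≤ a ∧ I N = Finset.Icc a b)
    (hβ1 : Tendsto (fun N : ℕ => ∑' n : ℕ, β N (n + 1)) atTop (nhds 1))
    (hα1 : Tendsto (fun N : ℕ => ∑' n : ℕ, α N (n + 1)) atTop (nhds 1))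
    (hαI : Tendsto (fun N : ℕ => ∑ n ∈ I N, α N n) atTop (nhds 1))
    (hαpos : ∀ N, ∀ n ∈ I N, 0 < α N n)
    (hE : Tendsto E atTop (nhds 0))
    (hEbd : ∀ N, ∀ n ∈ I N, |1 - β N n / α N n| ≤ E N) :
    ∀ ε : ℝ, 0 < ε → ∀ᶠ N : ℕ in atTop, ∀ f : ℕ → ℂ, (∀ n, ‖f n‖ ≤ 1) →
      ‖(∑' n : ℕ, (α N (n + 1) : ℂ) * f (n + 1)) -
        ∑' n : ℕ, (β N (n + 1) : ℂ) * f (n + 1)‖ < ε := by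
  intro ε hε
  have hlim : Tendsto (fun N => ∑' n, α N (n + 1) + ∑' n, β N (n + 1) -
      2 * (1 - E N) * ∑ n ∈ I N, α N n) atTop (nhds 0) := by
    have hconst : Tendsto (fun _ : ℕ => (1 : ℝ)) atTop (nhds 1) := tendsto_const_nhds
    convert (hα1.add hβ1).sub (((hconst.sub hE).const_mul 2).mul hαI) using 2
    norm_num
  filter_upwards [hlim.eventually_lt_const hε] with N hN f hf
  have hI0 : 0 ∉ I N := by
    obtain ⟨a, b, ha, hIab⟩ := hI N
    simp only [hIab, Finset.mem_Icc, not_and, not_le]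
    omega
  exact (norm_tsum_succ_mul_sub_le (hα0 N) (hβ0 N) (hαs N) (hβs N) hI0 (hαpos N) (hEbd N)
    hf).trans_lt hN
end

section
/- Let W ∈ 𝒲 be such that lim_{N→∞} ΔW(N)/W(N) exists and is positive. Let f : ℕ → ℂ and ℓ ∈ ℂ. If E^W_{n≤N} f(n) → ℓ as N → ∞, then f(N) → ℓ as N → ∞. -/
open Filter Finset

/-! As `ΔW(N)/W(N)` has a nonzero limit, `W(N)` and `ΔW(N)` are eventually nonzero, and then
`W(N) E_N - W(N-1) E_{N-1} = ΔW(N) f(N)`. With `q_N = W(N)/ΔW(N)` this reads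
`f(N) = q_N E_N - (q_N - 1) E_{N-1}`; as `q_N → 1/l` and both averages tend to `ℓ`,
the right-hand side tends to `ℓ/l - (1/l - 1) ℓ = ℓ`. -/

lemma dd_of_two_le (W : ℕ → ℝ) {N : ℕ} (hN : 2 ≤ N) : dd W N = W N - W (N - 1) := if_pos hN

lemma mul_wAvg (W : ℕ → ℝ) (f : ℕ → ℂ) {N : ℕ} (hW : W N ≠ 0) :
    (W N : ℂ) * wAvg W f N = ∑ n ∈ Icc 1 N, (dd W n : ℂ) * f n := by
  rw [wAvg, ← mul_assoc, mul_one_div_cancel (Complex.ofReal_ne_zero.mpr hW), one_mul]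

lemma dd_mul_eq_sub_mul_wAvg (W : ℕ → ℝ) (f : ℕ → ℂ) {N : ℕ} (hN : 2 ≤ N)
    (hW : W N ≠ 0) (hW' : W (N - 1) ≠ 0) :
    (dd W N : ℂ) * f N = W N * wAvg W f N - W (N - 1) * wAvg W f (N - 1) := by
  have hsplit := sum_Icc_succ_top (a := 1) (b := N - 1) (by omega) (fun n => (dd W n : ℂ) * f n)
  rw [Nat.sub_add_cancel (by omega : 1 ≤ N)] at hsplit
  rw [mul_wAvg W f hW, mul_wAvg W f hW', hsplit, add_sub_cancel_left]

lemma eq_sub_mul_wAvg (W : ℕ → ℝ) (f : ℕ → ℂ) {N : ℕ} (hN : 2 ≤ N)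
    (hW : W N ≠ 0) (hW' : W (N - 1) ≠ 0) (hdd : dd W N ≠ 0) :
    f N = wAvg W f N * ((W N / dd W N : ℝ) : ℂ)
      - wAvg W f (N - 1) * (((W N / dd W N : ℝ) : ℂ) - 1) := by
  have hddC : (dd W N : ℂ) ≠ 0 := Complex.ofReal_ne_zero.mpr hdd
  have hprev : (W (N - 1) : ℂ) = W N - dd W N := by
    rw [dd_of_two_le W hN]; push_cast; ring
  apply mul_left_cancel₀ hddC
  rw [dd_mul_eq_sub_mul_wAvg W f hN hW hW', hprev]
  push_cast
  field_simp

lemma eventually_ne_zero_of_tendsto_div {a b : ℕ → ℝ} {l : ℝ} (hl : l ≠ 0)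
    (h : Tendsto (fun N => a N / b N) atTop (nhds l)) : ∀ᶠ N in atTop, a N ≠ 0 ∧ b N ≠ 0 :=
  (h.eventually_ne hl).mono fun _ hN => div_ne_zero_iff.mp hN

theorem stmt8_general (W : ℕ → ℝ) (l : ℝ) (hl : 0 < l)
    (hlim : Tendsto (fun N : ℕ => dd W N / W N) atTop (nhds l))
    (f : ℕ → ℂ) (ℓ : ℂ)
    (havg : Tendsto (fun N : ℕ => wAvg W f N) atTop (nhds ℓ)) :
    Tendsto f atTop (nhds ℓ) := by
  have hne := eventually_ne_zero_of_tendsto_div hl.ne' hlim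
  have hprev := (tendsto_sub_atTop_nat 1).eventually hne
  have hq : Tendsto (fun N => ((W N / dd W N : ℝ) : ℂ)) atTop (nhds ((l⁻¹ : ℝ) : ℂ)) :=
    (Complex.continuous_ofReal.tendsto _).comp
      ((hlim.inv₀ hl.ne').congr fun N => inv_div _ _)
  have hlimit := (havg.mul hq).sub
    ((havg.comp (tendsto_sub_atTop_nat 1)).mul (hq.sub_const 1))
  rw [show ℓ * ((l⁻¹ : ℝ) : ℂ) - ℓ * (((l⁻¹ : ℝ) : ℂ) - 1) = ℓ by ring] at hlimit
  refine hlimit.congr' ?_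
  filter_upwards [hne, hprev, eventually_ge_atTop 2] with N ⟨hdd, hW⟩ ⟨_, hW'⟩ hN
  exact (eq_sub_mul_wAvg W f hN hW hW' hdd).symm

/-- Lemma 3.3: if `W ∈ 𝒲` and `ΔW(N)/W(N)` converges to a positive limit,
then convergence of the `W`-averages of `f` to `ℓ` implies `f(N) → ℓ`. -/
theorem stmt8 (W : ℕ → ℝ) (hW : memW W) (l : ℝ) (hl : 0 < l)
    (hlim : Tendsto (fun N : ℕ => dd W N / W N) atTop (nhds l))
    (f : ℕ → ℂ) (ℓ : ℂ)
    (havg : Tendsto (fun N : ℕ => wAvg W f N) atTop (nhds ℓ)) :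
    Tendsto f atTop (nhds ℓ) :=
  stmt8_general W l hl hlim f ℓ havg
end

section
/- The supremum, over all functions f : ℕ → ℂ with ‖f‖∞ ≤ 1, of | E^{bin}_{n≤N} ( E_{k≤n} f(k) ) − E_{n≤⌊N/2⌋} f(n) | tends to 0 as N → ∞. -/
open Filter Finset

/-!
The Cesàro averages of a sequence bounded by `C` vary slowly: `‖E_{k≤n} f - E_{k≤m} f‖ ≤
2C|n - m|/m`. The binomial weights `binom(N,n)/2^N` form a probability distribution with mean
`N/2` and variance `N/4`, so by Cauchy–Schwarz the binomial mean of the Cesàro averages differs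
from the Cesàro average at `m = ⌊N/2⌋` by at most `2C/m · √(N/4 + 1/4) = O(C/√N)`.
-/

section BinomialMoments

lemma sum_range_choose_real (N : ℕ) : ∑ i ∈ range (N + 1), (N.choose i : ℝ) = 2 ^ N := by
  exact_mod_cast Nat.sum_range_choose N

lemma add_one_mul_choose_add_one_real (M i : ℕ) :
    ((i : ℝ) + 1) * (M + 1).choose (i + 1) = (M + 1) * M.choose i := by
  exact_mod_cast (mul_comm _ _).trans (Nat.add_one_mul_choose_eq M i).symm

lemma sum_range_mul_choose_real (N : ℕ) :
    ∑ i ∈ range (N + 1), (i : ℝ) * N.choose i = N * 2 ^ N / 2 := by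
  cases N with
  | zero => simp
  | succ M =>
    rw [sum_range_succ']
    push_cast
    simp_rw [add_one_mul_choose_add_one_real, ← mul_sum, sum_range_choose_real]
    ring

lemma sum_range_sq_mul_choose_real (N : ℕ) :
    ∑ i ∈ range (N + 1), (i : ℝ) ^ 2 * N.choose i = (N ^ 2 + N) * 2 ^ N / 4 := by
  cases N with
  | zero => simp
  | succ M =>
    rw [sum_range_succ']
    have h (i : ℕ) : ((i : ℝ) + 1) ^ 2 * (M + 1).choose (i + 1) =
        (M + 1) * ((i : ℝ) * M.choose i + M.choose i) := by
      rw [sq, mul_assoc, add_one_mul_choose_add_one_real]; ring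
    push_cast
    simp_rw [h, ← mul_sum, sum_add_distrib, sum_range_mul_choose_real, sum_range_choose_real]
    ring

lemma sum_range_choose_mul_sub_sq (N : ℕ) (a : ℝ) :
    ∑ i ∈ range (N + 1), (N.choose i : ℝ) * ((i : ℝ) - a) ^ 2 =
      2 ^ N * (N + (N - 2 * a) ^ 2) / 4 := by
  have h (i : ℕ) : (N.choose i : ℝ) * ((i : ℝ) - a) ^ 2 =
      (i : ℝ) ^ 2 * N.choose i - 2 * a * ((i : ℝ) * N.choose i) + a ^ 2 * N.choose i := by
    ring
  simp_rw [h, sum_add_distrib, sum_sub_distrib, ← mul_sum, sum_range_sq_mul_choose_real,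
    sum_range_mul_choose_real, sum_range_choose_real]
  ring

end BinomialMoments

section Cesaro

variable {f : ℕ → ℂ} {C : ℝ}

lemma cesaro_zero (f : ℕ → ℂ) : cesaro f 0 = 0 := by
  simp [cesaro]

lemma natCast_mul_cesaro (f : ℕ → ℂ) (n : ℕ) :
    (n : ℂ) * cesaro f n = ∑ k ∈ Icc 1 n, f k := by
  rcases n.eq_zero_or_pos with rfl | hn
  · simp
  · rw [cesaro, ← mul_assoc, mul_one_div_cancel (by exact_mod_cast hn.ne'), one_mul]

lemma norm_sum_le_card_mul (hf : ∀ n, ‖f n‖ ≤ C) (s : Finset ℕ) :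
    ‖∑ k ∈ s, f k‖ ≤ #s * C := by
  simpa using norm_sum_le_of_le s fun k _ => hf k

lemma norm_cesaro_le (hf : ∀ n, ‖f n‖ ≤ C) (n : ℕ) : ‖cesaro f n‖ ≤ C := by
  rcases n.eq_zero_or_pos with rfl | hn
  · simpa [cesaro_zero] using (norm_nonneg _).trans (hf 0)
  · have hnR : (0 : ℝ) < n := by exact_mod_cast hn
    have h := norm_sum_le_card_mul hf (Icc 1 n)
    rw [← natCast_mul_cesaro, norm_mul, Complex.norm_natCast, Nat.card_Icc,
      Nat.add_sub_cancel] at h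
    exact le_of_mul_le_mul_left h hnR

lemma natCast_mul_norm_cesaro_sub_le (hf : ∀ n, ‖f n‖ ≤ C) {m n : ℕ} (hnm : n ≤ m) :
    (m : ℝ) * ‖cesaro f m - cesaro f n‖ ≤ 2 * C * ((m : ℝ) - n) := by
  have hsplit : (m : ℂ) * (cesaro f m - cesaro f n) =
      ∑ k ∈ Ioc n m, f k - ((m : ℂ) - n) * cesaro f n := by
    have h := sum_Ioc_consecutive f (Nat.zero_le n) hnm
    rw [← Icc_add_one_left_eq_Ioc 0 n, ← Icc_add_one_left_eq_Ioc 0 m, zero_add] at h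
    rw [mul_sub, natCast_mul_cesaro, ← h, ← natCast_mul_cesaro f n]
    ring
  have hmn : (0 : ℝ) ≤ m - n := sub_nonneg.mpr (by exact_mod_cast hnm)
  have hnew := norm_sum_le_card_mul hf (Ioc n m)
  rw [Nat.card_Ioc, Nat.cast_sub hnm] at hnew
  have hold : ‖((m : ℂ) - n) * cesaro f n‖ ≤ ((m : ℝ) - n) * C := by
    rw [norm_mul, ← Nat.cast_sub hnm, Complex.norm_natCast, Nat.cast_sub hnm]
    exact mul_le_mul_of_nonneg_left (norm_cesaro_le hf n) hmn
  calc (m : ℝ) * ‖cesaro f m - cesaro f n‖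
      = ‖∑ k ∈ Ioc n m, f k - ((m : ℂ) - n) * cesaro f n‖ := by
        rw [← hsplit, norm_mul, Complex.norm_natCast]
    _ ≤ ((m : ℝ) - n) * C + ((m : ℝ) - n) * C :=
        (norm_sub_le _ _).trans (add_le_add hnew hold)
    _ = 2 * C * ((m : ℝ) - n) := by ring

lemma norm_cesaro_sub_le (hf : ∀ n, ‖f n‖ ≤ C) {m : ℕ} (hm : 0 < m) (n : ℕ) :
    ‖cesaro f n - cesaro f m‖ ≤ 2 * C / m * |(n : ℝ) - m| := by
  have hmR : (0 : ℝ) < m := by exact_mod_cast hm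
  rw [div_mul_eq_mul_div, le_div_iff₀ hmR, mul_comm]
  rcases le_total n m with hnm | hmn
  · rw [norm_sub_rev, abs_of_nonpos (by linarith [(Nat.cast_le (α := ℝ)).mpr hnm]), neg_sub]
    exact natCast_mul_norm_cesaro_sub_le hf hnm
  · have hmnR : (m : ℝ) ≤ n := by exact_mod_cast hmn
    rw [abs_of_nonneg (by linarith)]
    calc (m : ℝ) * ‖cesaro f n - cesaro f m‖
        ≤ n * ‖cesaro f n - cesaro f m‖ := by gcongr
      _ ≤ 2 * C * ((n : ℝ) - m) := natCast_mul_norm_cesaro_sub_le hf hmn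

end Cesaro

section BinomialMean

variable {g : ℕ → ℂ}

lemma ebin_sub_eq_sum_smul (hg : g 0 = 0) (c : ℂ) (N : ℕ) :
    ebin g N - c = ∑ n ∈ range (N + 1), ((N.choose n : ℝ) / 2 ^ N) • (g n - c) := by
  have hrange : range (N + 1) = insert 0 (Icc 1 N) := by
    ext n; simp only [mem_range, mem_insert, mem_Icc]; omega
  have hc : c = ∑ n ∈ range (N + 1), ((N.choose n : ℝ) / 2 ^ N) • c := by
    rw [← sum_smul, ← sum_div, sum_range_choose_real, div_self (by positivity), one_smul]
  simp_rw [smul_sub, sum_sub_distrib, ← hc, hrange, sum_insert (by simp : 0 ∉ Icc 1 N), hg,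
    smul_zero, zero_add, ebin, mul_sum, Complex.real_smul]
  congr 1
  refine sum_congr rfl fun n _ => ?_
  push_cast
  ring

lemma norm_ebin_sub_sq_le (hg0 : g 0 = 0) {c : ℂ} {K a : ℝ}
    (hg : ∀ n : ℕ, ‖g n - c‖ ≤ K * |(n : ℝ) - a|) (N : ℕ) :
    ‖ebin g N - c‖ ^ 2 ≤ K ^ 2 * (N + (N - 2 * a) ^ 2) / 4 := by
  set w : ℕ → ℝ := fun n => (N.choose n : ℝ) / 2 ^ N
  have hw : ∀ n, 0 ≤ w n := fun n => by positivity
  have hnorm : ‖ebin g N - c‖ ≤ ∑ n ∈ range (N + 1), w n * (K * |(n : ℝ) - a|) := by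
    rw [ebin_sub_eq_sum_smul hg0]
    refine (norm_sum_le _ _).trans (sum_le_sum fun n _ => ?_)
    rw [norm_smul, Real.norm_of_nonneg (hw n)]
    exact mul_le_mul_of_nonneg_left (hg n) (hw n)
  have hcs := sum_sq_le_sum_mul_sum_of_sq_le_mul (range (N + 1)) (fun n _ => hw n)
    (fun n _ => mul_nonneg (hw n) (sq_nonneg (K * ((n : ℝ) - a))))
    (r := fun n => w n * (K * |(n : ℝ) - a|)) fun n _ => by
      rw [mul_pow, mul_pow, sq_abs, sq, mul_assoc, ← mul_pow]
  have hmass : ∑ n ∈ range (N + 1), w n = 1 := by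
    rw [← sum_div, sum_range_choose_real, div_self (by positivity)]
  have hmoment : ∑ n ∈ range (N + 1), w n * (K * ((n : ℝ) - a)) ^ 2 =
      K ^ 2 * (N + (N - 2 * a) ^ 2) / 4 := by
    have h : ∀ n, w n * (K * ((n : ℝ) - a)) ^ 2 =
        K ^ 2 / 2 ^ N * ((N.choose n : ℝ) * ((n : ℝ) - a) ^ 2) :=
      fun n => by simp only [w]; ring
    simp_rw [h, ← mul_sum, sum_range_choose_mul_sub_sq]
    field_simp
  calc ‖ebin g N - c‖ ^ 2 ≤ (∑ n ∈ range (N + 1), w n * (K * |(n : ℝ) - a|)) ^ 2 := by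
        gcongr
    _ ≤ K ^ 2 * (N + (N - 2 * a) ^ 2) / 4 := by rwa [hmass, one_mul, hmoment] at hcs

end BinomialMean

lemma norm_ebin_cesaro_sub_cesaro_half_sq_le {f : ℕ → ℂ} {C : ℝ} (hf : ∀ n, ‖f n‖ ≤ C)
    {N : ℕ} (hN : 2 ≤ N) : ‖ebin (cesaro f) N - cesaro f (N / 2)‖ ^ 2 ≤ 32 * C ^ 2 / N := by
  have hM : 0 < N / 2 := by omega
  have hbound := norm_ebin_sub_sq_le (cesaro_zero f) (norm_cesaro_sub_le hf hM) N
  have hm : (1 : ℝ) ≤ (N / 2 : ℕ) := by exact_mod_cast hM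
  have hlo : 2 * ((N / 2 : ℕ) : ℝ) ≤ N := by exact_mod_cast Nat.mul_div_le N 2
  have hhi : (N : ℝ) ≤ 2 * ((N / 2 : ℕ) : ℝ) + 1 := by
    exact_mod_cast (by omega : N ≤ 2 * (N / 2) + 1)
  set m : ℝ := ((N / 2 : ℕ) : ℝ)
  have hNpos : (0 : ℝ) < N := by linarith
  have hquad : ((N : ℝ) + (N - 2 * m) ^ 2) * N ≤ 32 * m ^ 2 := by
    have hparity : ((N : ℝ) - 2 * m) ^ 2 ≤ 1 := by nlinarith
    nlinarith
  calc ‖ebin (cesaro f) N - cesaro f (N / 2)‖ ^ 2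
      ≤ (2 * C / m) ^ 2 * (N + (N - 2 * m) ^ 2) / 4 := hbound
    _ = C ^ 2 * ((N + (N - 2 * m) ^ 2) / m ^ 2) := by field_simp; ring
    _ ≤ C ^ 2 * (32 / N) := by
        refine mul_le_mul_of_nonneg_left ?_ (sq_nonneg C)
        rwa [div_le_div_iff₀ (by positivity) hNpos]
    _ = 32 * C ^ 2 / N := by ring

/-- Theorem 4.3: binomial means of Cesàro averages agree with the Cesàro
average at scale `⌊N/2⌋`, uniformly over `f` with `‖f‖_∞ ≤ 1`. -/
theorem stmt11 :
    ∀ ε : ℝ, 0 < ε → ∀ᶠ N : ℕ in atTop, ∀ f : ℕ → ℂ, (∀ n, ‖f n‖ ≤ 1) →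
      ‖ebin (fun n => cesaro f n) N - cesaro f (N / 2)‖ < ε := by
  intro ε hε
  have hsmall : ∀ᶠ N : ℕ in atTop, 32 / (N : ℝ) < ε ^ 2 :=
    (tendsto_const_div_atTop_nhds_zero_nat (32 : ℝ)).eventually_lt_const (by positivity)
  filter_upwards [hsmall, eventually_ge_atTop 2] with N hN hN2 f hf
  have hsq := norm_ebin_cesaro_sub_cesaro_half_sq_le hf hN2
  rw [one_pow, mul_one] at hsq
  exact (pow_lt_pow_iff_left₀ (norm_nonneg _) hε.le two_ne_zero).mp (hsq.trans_lt hN)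
end

section
/- The supremum, over all functions f : ℕ → ℂ with ‖f‖∞ ≤ 1, of | E_{n≤N} ( E^{2bin}_{k≤n} f(k) ) − E_{n≤N} f(n) | tends to 0 as N → ∞. -/
open Filter Finset

/-!
After swapping the two sums, `∑_{n ≤ N} e2bin f n` is `∑_{k ≤ 2N} W_N(k) f(k)` up to an error of
at most `1` (the terms `k = 2n + 1` cut off by `e2bin`), where
`W_N(k) = ∑_{n ≤ N} C(n, ⌊k/2⌋) / 2^(n+1)`. A weighted hockey-stick identity gives
`W_N(k) = P(2 · Bin(N + 1, 1/2) > k)`, so `∑_{k ≤ 2N} |W_N(k) - 1_{k ≤ N}|` is at most the mean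
absolute deviation `E |N + 1 - 2 · Bin(N + 1, 1/2)| ≤ √(N + 1)`. Hence the two Cesàro averages
differ by at most `(1 + √(N + 1)) / N`, uniformly in `f`.
-/

theorem norm_sum_ofReal_mul_le {ι : Type*} (s : Finset ι) (r : ι → ℝ) {f : ι → ℂ}
    (hf : ∀ i, ‖f i‖ ≤ 1) : ‖∑ i ∈ s, (r i : ℂ) * f i‖ ≤ ∑ i ∈ s, |r i| :=
  (norm_sum_le _ _).trans <| sum_le_sum fun i _ => by
    rw [norm_mul, Complex.norm_real, Real.norm_eq_abs]
    exact mul_le_of_le_one_right (abs_nonneg _) (hf i)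

theorem Icc_one_eq_Ioc_zero (m : ℕ) : Icc 1 m = Ioc 0 m := Icc_add_one_left_eq_Ioc 0 m

theorem sum_choose_div_two_pow (M : ℕ) : ∑ i ∈ range (M + 1), (M.choose i : ℝ) / 2 ^ M = 1 := by
  rw [← sum_div, ← Nat.cast_sum, Nat.sum_range_choose]
  simp

theorem sum_choose_div_two_pow_mul_sq (M : ℕ) :
    ∑ i ∈ range (M + 1), (M.choose i : ℝ) / 2 ^ M * ((M : ℝ) - 2 * i) ^ 2 = (M : ℝ) := by
  have h := congrArg (Polynomial.eval (1 / 2 : ℝ)) (bernsteinPolynomial.variance ℝ M)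
  simp only [Polynomial.eval_finsetSum, bernsteinPolynomial, Polynomial.eval_mul,
    Polynomial.eval_pow, Polynomial.eval_sub, Polynomial.eval_natCast, Polynomial.eval_X,
    Polynomial.eval_one, nsmul_eq_mul] at h
  have term : ∀ i ∈ range (M + 1), (M.choose i : ℝ) / 2 ^ M * ((M : ℝ) - 2 * i) ^ 2 =
      4 * (((M : ℝ) * (1 / 2) - i) ^ 2 *
        ((M.choose i : ℝ) * (1 / 2) ^ i * (1 - 1 / 2) ^ (M - i))) := by
    intro i hi
    rw [show (1 : ℝ) - 1 / 2 = 1 / 2 by norm_num, mul_assoc _ ((1 / 2 : ℝ) ^ i), ← pow_add,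
      Nat.add_sub_cancel' (by simpa [Nat.lt_succ_iff] using hi), one_div_pow]
    field_simp
    ring
  rw [sum_congr rfl term, ← mul_sum, h]
  ring

theorem sum_choose_div_two_pow_mul_abs_le (M : ℕ) :
    ∑ i ∈ range (M + 1), (M.choose i : ℝ) / 2 ^ M * |(M : ℝ) - 2 * i| ≤ √M := by
  apply Real.le_sqrt_of_sq_le
  calc (∑ i ∈ range (M + 1), (M.choose i : ℝ) / 2 ^ M * |(M : ℝ) - 2 * i|) ^ 2
      ≤ (∑ i ∈ range (M + 1), (M.choose i : ℝ) / 2 ^ M) *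
          ∑ i ∈ range (M + 1), (M.choose i : ℝ) / 2 ^ M * ((M : ℝ) - 2 * i) ^ 2 :=
        sum_sq_le_sum_mul_sum_of_sq_le_mul _ (fun i _ => by positivity)
          (fun i _ => by positivity) fun i _ => le_of_eq <| by rw [mul_pow, sq_abs]; ring
    _ = M := by rw [sum_choose_div_two_pow, sum_choose_div_two_pow_mul_sq, one_mul]

theorem sum_range_choose_mul_ite_lt_succ (N j : ℕ) :
    ∑ i ∈ range (N + 2), ((N + 1).choose i : ℝ) * (if j < i then 1 else 0) =
      2 * ∑ i ∈ range (N + 1), (N.choose i : ℝ) * (if j < i then 1 else 0) + N.choose j := by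
  have lt_succ_ite : ∀ i, (if j < i + 1 then (1 : ℝ) else 0) =
      (if j < i then 1 else 0) + if i = j then 1 else 0 := by
    intro i
    split_ifs <;> first | omega | norm_num
  rw [sum_choose_succ_mul (fun i _ => if j < i then (1 : ℝ) else 0)]
  have hchoose : (if j < N + 1 then (N.choose j : ℝ) else 0) = N.choose j := by
    split_ifs with h
    · rfl
    · rw [Nat.choose_eq_zero_of_lt (by omega), Nat.cast_zero]
  simp only [lt_succ_ite, mul_add, sum_add_distrib, mul_ite, mul_one, mul_zero, sum_ite_eq',
    mem_range, hchoose]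
  ring

-- Both sides are the probability of at least `j + 1` heads in `N` fair tosses; the left side
-- sorts by the toss `n + 1` that brings the `(j + 1)`-st head.
theorem sum_range_choose_div_two_pow (N j : ℕ) :
    ∑ n ∈ range N, (n.choose j : ℝ) / 2 ^ (n + 1) =
      (∑ i ∈ range (N + 1), (N.choose i : ℝ) * (if j < i then 1 else 0)) / 2 ^ N := by
  induction N with
  | zero => simp
  | succ N ih =>
    rw [sum_range_succ, ih, sum_range_choose_mul_ite_lt_succ, pow_succ]
    field_simp

theorem sum_Ioc_choose_div_two_le_one (n m : ℕ) : ∑ k ∈ Ioc (2 * n) m, n.choose (k / 2) ≤ 1 :=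
  calc ∑ k ∈ Ioc (2 * n) m, n.choose (k / 2) ≤ ∑ k ∈ {2 * n + 1}, n.choose (k / 2) := by
        refine sum_le_sum_of_ne_zero fun k hk hne => ?_
        have := Nat.choose_eq_zero_of_lt (n := n) (k := k / 2)
        simp only [mem_Ioc] at hk
        simp only [mem_singleton]
        omega
    _ = 1 := by simp [show (2 * n + 1) / 2 = n by omega]

theorem sum_abs_ite_lt_sub_ite_lt_le (s : Finset ℕ) (a b : ℕ) :
    ∑ k ∈ s, |(if k < a then (1 : ℝ) else 0) - if k < b then 1 else 0| ≤ |(a : ℝ) - b| := by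
  have indicator : ∀ k, |(if k < a then (1 : ℝ) else 0) - if k < b then 1 else 0| =
      if k ∈ Ico (min a b) (max a b) then 1 else 0 := by
    intro k
    simp only [mem_Ico]
    split_ifs <;> first | omega | norm_num
  rw [sum_congr rfl fun k _ => indicator k, sum_boole]
  calc ((s.filter (· ∈ Ico (min a b) (max a b))).card : ℝ) ≤ (Ico (min a b) (max a b)).card :=
        Nat.cast_le.2 (card_le_card fun k hk => (mem_filter.1 hk).2)
    _ = |(a : ℝ) - b| := by
      rw [Nat.card_Ico, Nat.cast_sub min_le_max, Nat.cast_max, Nat.cast_min, max_sub_min_eq_abs,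
        abs_sub_comm]

-- The probability that `2 · Bin(n, 1/2) + Bernoulli(1/2) = k`.
noncomputable def e2binWeight (n k : ℕ) : ℝ := (n.choose (k / 2) : ℝ) / 2 ^ (n + 1)

theorem e2bin_eq_sum_e2binWeight (f : ℕ → ℂ) (n : ℕ) :
    e2bin f n = ∑ k ∈ Icc 1 (2 * n), (e2binWeight n k : ℂ) * f k := by
  simp only [e2bin, e2binWeight, mul_sum]
  push_cast
  ring_nf

theorem norm_e2bin_sub_sum_le {f : ℕ → ℂ} (hf : ∀ n, ‖f n‖ ≤ 1) {n N : ℕ} (hn : n ≤ N) :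
    ‖e2bin f n - ∑ k ∈ Icc 1 (2 * N), (e2binWeight n k : ℂ) * f k‖ ≤ 1 / 2 ^ (n + 1) := by
  rw [e2bin_eq_sum_e2binWeight, Icc_one_eq_Ioc_zero, Icc_one_eq_Ioc_zero,
    ← sum_Ioc_consecutive _ (Nat.zero_le (2 * n)) (by omega : 2 * n ≤ 2 * N), sub_add_cancel_left,
    norm_neg]
  refine (norm_sum_ofReal_mul_le _ _ hf).trans ?_
  have hchoose : (∑ k ∈ Ioc (2 * n) (2 * N), n.choose (k / 2) : ℝ) ≤ 1 := by
    exact_mod_cast sum_Ioc_choose_div_two_le_one n (2 * N)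
  simp only [e2binWeight, abs_div, Nat.abs_cast, abs_pow, abs_two, ← sum_div]
  gcongr

theorem norm_sum_e2bin_sub_sum_le {f : ℕ → ℂ} (hf : ∀ n, ‖f n‖ ≤ 1) (N : ℕ) :
    ‖∑ n ∈ Icc 1 N, e2bin f n -
        ∑ k ∈ Icc 1 (2 * N), ((∑ n ∈ range (N + 1), e2binWeight n k : ℝ) : ℂ) * f k‖ ≤ 1 := by
  have hzero : e2bin f 0 = 0 := by simp [e2bin]
  have hrange : ∑ n ∈ Icc 1 N, e2bin f n = ∑ n ∈ range (N + 1), e2bin f n := by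
    rw [range_eq_Ico, sum_eq_sum_Ico_succ_bot (Nat.succ_pos N), hzero, zero_add]
    rfl
  have hswap : ∑ k ∈ Icc 1 (2 * N), ((∑ n ∈ range (N + 1), e2binWeight n k : ℝ) : ℂ) * f k =
      ∑ n ∈ range (N + 1), ∑ k ∈ Icc 1 (2 * N), (e2binWeight n k : ℂ) * f k := by
    simp only [Complex.ofReal_sum, sum_mul]
    exact sum_comm
  rw [hrange, hswap, ← sum_sub_distrib]
  calc _ ≤ ∑ n ∈ range (N + 1), (1 : ℝ) / 2 ^ (n + 1) :=
        (norm_sum_le _ _).trans <| sum_le_sum fun n hn =>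
          norm_e2bin_sub_sum_le hf (Nat.lt_succ_iff.1 (mem_range.1 hn))
    _ = (∑ n ∈ range (N + 1), (1 / 2 : ℝ) ^ n) / 2 := by
        rw [sum_div]
        exact sum_congr rfl fun n _ => by rw [one_div_pow, div_div, ← pow_succ]
    _ ≤ 1 := by linarith [sum_geometric_two_le (N + 1)]

theorem sum_e2binWeight_sub_ite_eq (N k : ℕ) :
    ∑ n ∈ range (N + 1), e2binWeight n k - (if k ≤ N then 1 else 0) =
      ∑ i ∈ range (N + 2), ((N + 1).choose i : ℝ) / 2 ^ (N + 1) *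
        ((if k < 2 * i then 1 else 0) - if k < N + 1 then 1 else 0) := by
  have hdiv : ∀ i, k / 2 < i ↔ k < 2 * i := fun i => by omega
  have hle : k ≤ N ↔ k < N + 1 := Nat.lt_succ_iff.symm
  simp only [e2binWeight, sum_range_choose_div_two_pow, hdiv, hle, mul_sub, sum_sub_distrib,
    ← sum_mul, sum_choose_div_two_pow, one_mul, sum_div, mul_div_right_comm]

theorem sum_abs_sum_e2binWeight_sub_le (N : ℕ) :
    ∑ k ∈ Icc 1 (2 * N), |∑ n ∈ range (N + 1), e2binWeight n k - if k ≤ N then 1 else 0| ≤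
      √((N : ℝ) + 1) := by
  calc _ ≤ ∑ k ∈ Icc 1 (2 * N), ∑ i ∈ range (N + 2), ((N + 1).choose i : ℝ) / 2 ^ (N + 1) *
          |(if k < 2 * i then 1 else 0) - if k < N + 1 then 1 else 0| := by
        refine sum_le_sum fun k _ => ?_
        rw [sum_e2binWeight_sub_ite_eq]
        refine (abs_sum_le_sum_abs _ _).trans_eq (sum_congr rfl fun i _ => ?_)
        rw [abs_mul, abs_of_nonneg (by positivity)]
    _ ≤ ∑ i ∈ range (N + 2),
          ((N + 1).choose i : ℝ) / 2 ^ (N + 1) * |((N + 1 : ℕ) : ℝ) - 2 * i| := by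
        rw [sum_comm]
        refine sum_le_sum fun i _ => ?_
        rw [← mul_sum, abs_sub_comm]
        gcongr
        exact_mod_cast sum_abs_ite_lt_sub_ite_lt_le _ (2 * i) (N + 1)
    _ ≤ √((N : ℝ) + 1) := by exact_mod_cast sum_choose_div_two_pow_mul_abs_le (N + 1)

theorem norm_cesaro_e2bin_sub_cesaro_le {f : ℕ → ℂ} (hf : ∀ n, ‖f n‖ ≤ 1) (N : ℕ) :
    ‖cesaro (fun n => e2bin f n) N - cesaro f N‖ ≤ (1 + √((N : ℝ) + 1)) / N := by
  set W : ℕ → ℝ := fun k => ∑ n ∈ range (N + 1), e2binWeight n k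
  have hcesaro : ∑ k ∈ Icc 1 N, f k =
      ∑ k ∈ Icc 1 (2 * N), (((if k ≤ N then 1 else 0 : ℝ)) : ℂ) * f k := by
    simp only [apply_ite Complex.ofReal, Complex.ofReal_one, Complex.ofReal_zero, ite_mul,
      one_mul, zero_mul, ← sum_filter]
    congr 1
    ext k
    simp only [mem_Icc, mem_filter]
    omega
  have hsplit : ∑ n ∈ Icc 1 N, e2bin f n - ∑ k ∈ Icc 1 N, f k =
      (∑ n ∈ Icc 1 N, e2bin f n - ∑ k ∈ Icc 1 (2 * N), (W k : ℂ) * f k) +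
        ∑ k ∈ Icc 1 (2 * N), ((W k - if k ≤ N then 1 else 0 : ℝ) : ℂ) * f k := by
    simp only [hcesaro, Complex.ofReal_sub, sub_mul, sum_sub_distrib]
    ring
  rw [cesaro, cesaro, ← mul_sub, norm_mul, hsplit, norm_div, norm_one, Complex.norm_natCast,
    one_div_mul_eq_div]
  gcongr
  exact (norm_add_le _ _).trans (add_le_add (norm_sum_e2bin_sub_sum_le hf N)
    ((norm_sum_ofReal_mul_le _ _ hf).trans (sum_abs_sum_e2binWeight_sub_le N)))

theorem one_add_sqrt_succ_div_le {N : ℕ} (hN : 1 ≤ N) :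
    (1 + √((N : ℝ) + 1)) / N ≤ 3 / √N := by
  have hN' : (1 : ℝ) ≤ N := by exact_mod_cast hN
  have hone : 1 ≤ √(N : ℝ) := Real.one_le_sqrt.2 hN'
  have hsucc : √((N : ℝ) + 1) ≤ 2 * √N := by
    rw [Real.sqrt_le_iff, mul_pow, Real.sq_sqrt (by positivity)]
    constructor <;> nlinarith
  have hsq : √(N : ℝ) * √N = N := Real.mul_self_sqrt (Nat.cast_nonneg N)
  rw [div_le_div_iff₀ (by positivity) (by positivity)]
  nlinarith

theorem tendsto_one_add_sqrt_succ_div_atTop :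
    Tendsto (fun N : ℕ => (1 + √((N : ℝ) + 1)) / N) atTop (nhds 0) :=
  squeeze_zero' (Eventually.of_forall fun N => by positivity)
    ((eventually_ge_atTop 1).mono fun _ => one_add_sqrt_succ_div_le)
    (tendsto_const_nhds.div_atTop (Real.tendsto_sqrt_atTop.comp tendsto_natCast_atTop_atTop))

/-- Corollary 4.4: Cesàro averages of parity-neutral binomial means
agree with Cesàro averages, uniformly over `f` with `‖f‖_∞ ≤ 1`. -/
theorem stmt12 :
    ∀ ε : ℝ, 0 < ε → ∀ᶠ N : ℕ in atTop, ∀ f : ℕ → ℂ, (∀ n, ‖f n‖ ≤ 1) →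
      ‖cesaro (fun n => e2bin f n) N - cesaro f N‖ < ε := by
  intro ε hε
  filter_upwards [tendsto_one_add_sqrt_succ_div_atTop.eventually (gt_mem_nhds hε)] with N hN f hf
  exact (norm_cesaro_e2bin_sub_cesaro_le hf N).trans_lt hN
end

section
/- Let x₀ ∈ ℝ and let h : ℝ → ℝ be twice differentiable on [x₀,∞), with h'(x) → ∞ as x → ∞, and with h'' positive and non-increasing on [x₀,∞). Then there exist infinitely many N ∈ ℕ such that the distance from h'(N) to the nearest integer is at most h''(N). -/
open Filter Finset

lemma frequently_floor_lt_floor_succ {u : ℕ → ℝ} (hu : Tendsto u atTop atTop) :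
    ∃ᶠ N in atTop, ⌊u N⌋ < ⌊u (N + 1)⌋ := by
  intro hstall
  obtain ⟨K, hK⟩ := eventually_atTop.mp hstall
  have hbound : ∀ N, K ≤ N → ⌊u N⌋ ≤ ⌊u K⌋ := by
    intro N hN
    induction N, hN using Nat.le_induction with
    | base => rfl
    | succ N hKN ih => exact (not_lt.mp (hK N hKN)).trans ih
  obtain ⟨N, hN⟩ := ((hu.eventually_gt_atTop (⌊u K⌋ + 1 : ℝ)).and
    (eventually_ge_atTop K)).exists
  have hfloor : (⌊u N⌋ : ℝ) ≤ ⌊u K⌋ := by exact_mod_cast hbound N hN.2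
  linarith [Int.lt_floor_add_one (u N)]

lemma sub_le_mul_sub_of_hasDerivAt_of_antitoneOn {f f' : ℝ → ℝ} {a b : ℝ} (hab : a < b)
    (hf : ∀ x ∈ Set.Icc a b, HasDerivAt f (f' x) x) (hf' : AntitoneOn f' (Set.Icc a b)) :
    f b - f a ≤ f' a * (b - a) := by
  obtain ⟨ξ, hξ, hslope⟩ := exists_hasDerivAt_eq_slope f f' hab
    (fun x hx => (hf x hx).continuousAt.continuousWithinAt)
    (fun x hx => hf x (Set.Ioo_subset_Icc_self hx))
  have hξa : f' ξ ≤ f' a :=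
    hf' (Set.left_mem_Icc.mpr hab.le) (Set.Ioo_subset_Icc_self hξ) hξ.1.le
  rwa [hslope, div_le_iff₀ (sub_pos.mpr hab)] at hξa

lemma exists_abs_sub_intCast_le_of_floor_lt_floor {x y d : ℝ} (hxy : ⌊x⌋ < ⌊y⌋)
    (hd : y - x ≤ d) : ∃ m : ℤ, |x - m| ≤ d := by
  refine ⟨⌊y⌋, ?_⟩
  have hlt : x < ⌊y⌋ := Int.floor_lt.mp hxy
  rw [abs_of_neg (sub_neg.mpr hlt)]
  linarith [Int.floor_le y]

theorem stmt19_general (x₀ : ℝ) (h' h'' : ℝ → ℝ)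
    (hd2 : ∀ x ∈ Set.Ici x₀, HasDerivAt h' (h'' x) x)
    (hinf : Tendsto h' atTop atTop)
    (hanti : AntitoneOn h'' (Set.Ici x₀)) :
    {N : ℕ | ∃ m : ℤ, |h' (N : ℝ) - (m : ℝ)| ≤ h'' (N : ℝ)}.Infinite := by
  rw [← Nat.frequently_atTop_iff_infinite]
  have hjumps := (frequently_floor_lt_floor_succ (u := fun N : ℕ => h' N)
    (hinf.comp tendsto_natCast_atTop_atTop)).and_eventually (eventually_ge_atTop ⌈x₀⌉₊)
  refine hjumps.mono fun N ⟨hjump, hN⟩ => ?_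
  have hIcc : Set.Icc (N : ℝ) (N + 1) ⊆ Set.Ici x₀ :=
    fun x hx => (Nat.ceil_le.mp hN).trans hx.1
  have hstep : h' (N + 1) - h' N ≤ h'' N := by
    simpa using sub_le_mul_sub_of_hasDerivAt_of_antitoneOn (lt_add_one (N : ℝ))
      (fun x hx => hd2 x (hIcc hx)) (hanti.mono hIcc)
  push_cast at hjump
  exact exists_abs_sub_intCast_le_of_floor_lt_floor hjump hstep

/-- Lemma 5.13, Diophantine approximation of `h'`:
if `h' → ∞` and `h''` is positive and non-increasing on `[x₀,∞)`, then for infinitely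
many `N ∈ ℕ` the distance from `h'(N)` to the nearest integer is at most `h''(N)`. -/
theorem stmt19 (x₀ : ℝ) (h h' h'' : ℝ → ℝ)
    (hd1 : ∀ x ∈ Set.Ici x₀, HasDerivAt h (h' x) x)
    (hd2 : ∀ x ∈ Set.Ici x₀, HasDerivAt h' (h'' x) x)
    (hinf : Tendsto h' atTop atTop)
    (hpos : ∀ x ∈ Set.Ici x₀, 0 < h'' x)
    (hanti : AntitoneOn h'' (Set.Ici x₀)) :
    {N : ℕ | ∃ m : ℤ, |h' (N : ℝ) - (m : ℝ)| ≤ h'' (N : ℝ)}.Infinite :=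
  stmt19_general x₀ h' h'' hd2 hinf hanti
end
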